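/- Let Σ be a d×d real symmetric positive semidefinite matrix, Σ̃ a d×d real symmetric positive definite matrix, μ, μ̃ ∈ ℝ^d, and P = Σ̃^{−1/2}·(Σ̃^{1/2}·Σ·Σ̃^{1/2})^{1/2}·Σ̃^{−1/2} the optimal transport map matrix. Let ν be a probability measure on ℝ^d with square-integrable identity map, mean ∫ y dν(y) = μ̃, and covariance matrix with entries ∫ (y_i − μ̃_i)(y_j − μ̃_j) dν equal to Σ̃. Define T : ℝ^d → ℝ^d by T(y) = μ + P·(y − μ̃). Then the pushforward measure T_*ν has mean μ and covariance matrix Σ, and ∫ ‖T(y) − y‖² dν(y) = ‖μ − μ̃‖² + tr(Σ) + tr(Σ̃) − 2·tr((Σ̃^{1/2}·Σ·Σ̃^{1/2})^{1/2}). -/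

import Mathlib

/-!
Centre `ν` at its mean: `T y - μ = P (y - μ̃)` and `T y - y = (μ - μ̃) + (P - 1) (y - μ̃)`.
For matrices `A`, `B` the centred images `A (y - μ̃)`, `B (y - μ̃)` have mean zero and
cross-covariance `A Σ̃ Bᵀ`. Since `P` is symmetric with `P Σ̃ P = Σ`, the pushforward has
covariance `Σ`, and the cost is
`‖μ - μ̃‖² + tr ((P - 1) Σ̃ (P - 1)) = ‖μ - μ̃‖² + tr Σ + tr Σ̃ - 2 tr (P Σ̃)`, where `tr (P Σ̃) = tr ((Σ̃^{1/2} Σ Σ̃^{1/2})^{1/2})` by cyclicity of the trace.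
-/

open MeasureTheory Matrix
open scoped Classical

/-- The unique positive semidefinite square root of a positive semidefinite real matrix
(junk value `0` if the matrix is not positive semidefinite). -/
noncomputable def psdSqrt {d : ℕ} (A : Matrix (Fin d) (Fin d) ℝ) : Matrix (Fin d) (Fin d) ℝ :=
  if h : A.PosSemidef then
    (h.1.eigenvectorUnitary : Matrix (Fin d) (Fin d) ℝ) *
      diagonal ((↑) ∘ (√·) ∘ h.1.eigenvalues) *
      (star h.1.eigenvectorUnitary : Matrix (Fin d) (Fin d) ℝ)
  else 0

/-- The optimal transport map matrix `P = Σ̃^{-1/2} (Σ̃^{1/2} Σ Σ̃^{1/2})^{1/2} Σ̃^{-1/2}`. -/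
noncomputable def otMap {d : ℕ} (S St : Matrix (Fin d) (Fin d) ℝ) :
    Matrix (Fin d) (Fin d) ℝ :=
  (psdSqrt St)⁻¹ * psdSqrt (psdSqrt St * S * psdSqrt St) * (psdSqrt St)⁻¹

section PsdSqrt

variable {d : ℕ}

lemma psdSqrt_of_posSemidef {A : Matrix (Fin d) (Fin d) ℝ} (hA : A.PosSemidef) :
    psdSqrt A = (hA.1.eigenvectorUnitary : Matrix (Fin d) (Fin d) ℝ) *
      diagonal ((↑) ∘ (√·) ∘ hA.1.eigenvalues) *
      (star hA.1.eigenvectorUnitary : Matrix (Fin d) (Fin d) ℝ) :=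
  dif_pos hA

lemma posSemidef_psdSqrt {A : Matrix (Fin d) (Fin d) ℝ} (hA : A.PosSemidef) :
    (psdSqrt A).PosSemidef := by
  have hD : (diagonal ((↑) ∘ (√·) ∘ hA.1.eigenvalues) : Matrix (Fin d) (Fin d) ℝ).PosSemidef :=
    posSemidef_diagonal_iff.mpr fun i => by simp [Real.sqrt_nonneg]
  rw [psdSqrt_of_posSemidef hA, star_eq_conjTranspose]
  exact hD.mul_mul_conjTranspose_same _

lemma psdSqrt_mul_self {A : Matrix (Fin d) (Fin d) ℝ} (hA : A.PosSemidef) :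
    psdSqrt A * psdSqrt A = A := by
  set U : Matrix (Fin d) (Fin d) ℝ := ↑hA.1.eigenvectorUnitary
  set D : Matrix (Fin d) (Fin d) ℝ := diagonal ((↑) ∘ (√·) ∘ hA.1.eigenvalues)
  have hU : star U * U = 1 := Unitary.coe_star_mul_self hA.1.eigenvectorUnitary
  have hD : D * D = diagonal ((↑) ∘ hA.1.eigenvalues) := by
    rw [diagonal_mul_diagonal]
    congr 1
    funext i
    simp [Real.mul_self_sqrt (hA.eigenvalues_nonneg i)]
  conv_rhs => rw [hA.1.spectral_theorem, Unitary.conjStarAlgAut_apply]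
  calc psdSqrt A * psdSqrt A = U * (D * (star U * U) * D) * star U := by
        simp only [psdSqrt_of_posSemidef hA, Matrix.mul_assoc]; rfl
    _ = _ := by rw [hU, Matrix.mul_one, hD]; rfl

lemma isUnit_det_psdSqrt {A : Matrix (Fin d) (Fin d) ℝ} (hA : A.PosDef) :
    IsUnit (psdSqrt A).det := by
  refine isUnit_iff_ne_zero.mpr (left_ne_zero_of_mul (b := (psdSqrt A).det) ?_)
  rw [← det_mul, psdSqrt_mul_self hA.posSemidef]
  exact hA.det_pos.ne'

variable {S St : Matrix (Fin d) (Fin d) ℝ}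

lemma posSemidef_psdSqrt_mul_mul_psdSqrt (hS : S.PosSemidef) (hSt : St.PosSemidef) :
    (psdSqrt St * S * psdSqrt St).PosSemidef := by
  simpa only [(posSemidef_psdSqrt hSt).1.eq] using hS.mul_mul_conjTranspose_same (psdSqrt St)

lemma otMap_transpose (hS : S.PosSemidef) (hSt : St.PosSemidef) :
    (otMap S St)ᵀ = otMap S St := by
  have hs : (psdSqrt St).IsSymm := isHermitian_iff_isSymm.mp (posSemidef_psdSqrt hSt).1
  have hm : (psdSqrt (psdSqrt St * S * psdSqrt St)).IsSymm :=
    isHermitian_iff_isSymm.mp (posSemidef_psdSqrt (posSemidef_psdSqrt_mul_mul_psdSqrt hS hSt)).1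
  rw [otMap, transpose_mul, transpose_mul, hs.inv.eq, hm.eq, ← Matrix.mul_assoc]

lemma otMap_mul_mul_otMap (hS : S.PosSemidef) (hSt : St.PosDef) :
    otMap S St * St * otMap S St = S := by
  have hs := isUnit_det_psdSqrt hSt
  have hss := psdSqrt_mul_self hSt.posSemidef
  have hmm := psdSqrt_mul_self (posSemidef_psdSqrt_mul_mul_psdSqrt hS hSt.posSemidef)
  rw [otMap]
  set s := psdSqrt St
  set m := psdSqrt (s * S * s)
  rw [← hss]
  simp only [Matrix.mul_assoc, nonsing_inv_mul_cancel_left _ _ hs,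
    mul_nonsing_inv_cancel_left _ _ hs]
  rw [← Matrix.mul_assoc m m, hmm]
  simp only [Matrix.mul_assoc, nonsing_inv_mul_cancel_left _ _ hs, mul_nonsing_inv _ hs,
    Matrix.mul_one]

lemma trace_otMap_mul (hSt : St.PosDef) :
    (otMap S St * St).trace = (psdSqrt (psdSqrt St * S * psdSqrt St)).trace := by
  have hs := isUnit_det_psdSqrt hSt
  have hss := psdSqrt_mul_self hSt.posSemidef
  rw [otMap]
  set s := psdSqrt St
  rw [← hss]
  simp only [Matrix.mul_assoc, nonsing_inv_mul_cancel_left _ _ hs]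
  rw [trace_mul_comm, Matrix.mul_assoc, mul_nonsing_inv _ hs, Matrix.mul_one]

lemma trace_otMap_sub_one_mul_mul_transpose (hS : S.PosSemidef) (hSt : St.PosDef) :
    ((otMap S St - 1) * St * (otMap S St - 1)ᵀ).trace =
      S.trace + St.trace - 2 * (psdSqrt (psdSqrt St * S * psdSqrt St)).trace := by
  rw [transpose_sub, transpose_one, otMap_transpose hS hSt.posSemidef]
  simp only [Matrix.sub_mul, Matrix.mul_sub, Matrix.one_mul, Matrix.mul_one, trace_sub]
  rw [otMap_mul_mul_otMap hS hSt, trace_mul_comm St, trace_otMap_mul hSt]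
  ring

end PsdSqrt

section Moments

variable {d : ℕ}

lemma integrable_apply_mul_apply {α : Type*} [MeasurableSpace α] {μ : Measure α}
    {f g : α → EuclideanSpace ℝ (Fin d)} (hf : MemLp f 2 μ) (hg : MemLp g 2 μ) (i j : Fin d) :
    Integrable (fun x => f x i * g x j) μ :=
  ((EuclideanSpace.proj (𝕜 := ℝ) i).comp_memLp' hf).integrable_mul
    ((EuclideanSpace.proj (𝕜 := ℝ) j).comp_memLp' hg)

variable {ν : Measure (EuclideanSpace ℝ (Fin d))} {m : EuclideanSpace ℝ (Fin d)}

lemma memLp_toEuclideanLin_sub [IsFiniteMeasure ν] (hint : MemLp (fun y => y) 2 ν)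
    (A : Matrix (Fin d) (Fin d) ℝ) : MemLp (fun y => toEuclideanLin A (y - m)) 2 ν :=
  (LinearMap.toContinuousLinearMap (toEuclideanLin A)).comp_memLp' (hint.sub (memLp_const m))

lemma integral_toEuclideanLin_sub_eq_zero [IsProbabilityMeasure ν]
    (hi : Integrable (fun y => y) ν) (hmean : ∫ y, y ∂ν = m) (A : Matrix (Fin d) (Fin d) ℝ) :
    ∫ y, toEuclideanLin A (y - m) ∂ν = 0 := by
  let L := LinearMap.toContinuousLinearMap (toEuclideanLin A)
  calc ∫ y, toEuclideanLin A (y - m) ∂ν = L (∫ y, (y - m) ∂ν) :=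
        L.integral_comp_comm (hi.sub (integrable_const m))
    _ = 0 := by simp [integral_sub hi (integrable_const m), hmean]

lemma integral_toEuclideanLin_sub_apply_mul [IsFiniteMeasure ν] (hint : MemLp (fun y => y) 2 ν)
    {C : Matrix (Fin d) (Fin d) ℝ} (hcov : ∀ i j, ∫ y, (y i - m i) * (y j - m j) ∂ν = C i j)
    (A B : Matrix (Fin d) (Fin d) ℝ) (i j : Fin d) :
    ∫ y, toEuclideanLin A (y - m) i * toEuclideanLin B (y - m) j ∂ν = (A * C * Bᵀ) i j := by
  have hc : MemLp (fun y => y - m) 2 ν := hint.sub (memLp_const m)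
  have hkl : ∀ k l, Integrable (fun y => (y k - m k) * (y l - m l)) ν :=
    integrable_apply_mul_apply hc hc
  calc ∫ y, toEuclideanLin A (y - m) i * toEuclideanLin B (y - m) j ∂ν
      = ∫ y, ∑ k, ∑ l, A i k * B j l * ((y k - m k) * (y l - m l)) ∂ν := by
        congr 1 with y
        simp only [ofLp_toLpLin, toLin'_apply, mulVec, dotProduct, Finset.sum_mul_sum,
          PiLp.sub_apply]
        exact Finset.sum_congr rfl fun k _ => Finset.sum_congr rfl fun l _ => by ring
    _ = ∑ k, ∑ l, A i k * B j l * C k l := by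
        rw [integral_finsetSum _ fun k _ => integrable_finsetSum _ fun l _ => (hkl k l).const_mul _]
        simp_rw [integral_finsetSum _ fun l _ => (hkl _ l).const_mul _, integral_const_mul, hcov]
    _ = (A * C * Bᵀ) i j := by
        simp only [mul_apply, transpose_apply, Finset.sum_mul]
        rw [Finset.sum_comm]
        exact Finset.sum_congr rfl fun l _ => Finset.sum_congr rfl fun k _ => by ring

lemma integral_norm_add_toEuclideanLin_sub_sq [IsProbabilityMeasure ν]
    (hint : MemLp (fun y => y) 2 ν) (hmean : ∫ y, y ∂ν = m)
    {C : Matrix (Fin d) (Fin d) ℝ} (hcov : ∀ i j, ∫ y, (y i - m i) * (y j - m j) ∂ν = C i j)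
    (c : EuclideanSpace ℝ (Fin d)) (A : Matrix (Fin d) (Fin d) ℝ) :
    ∫ y, ‖c + toEuclideanLin A (y - m)‖ ^ 2 ∂ν = ‖c‖ ^ 2 + (A * C * Aᵀ).trace := by
  have hv := memLp_toEuclideanLin_sub hint A (m := m)
  have hinner : Integrable (fun y => 2 * inner ℝ c (toEuclideanLin A (y - m))) ν :=
    ((hv.integrable one_le_two).const_inner c).const_mul 2
  have hlin : Integrable (fun y => ‖c‖ ^ 2 + 2 * inner ℝ c (toEuclideanLin A (y - m))) ν :=
    (integrable_const _).add hinner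
  have hnorm : Integrable (fun y => ‖toEuclideanLin A (y - m)‖ ^ 2) ν :=
    hv.integrable_norm_pow two_ne_zero
  have hmean_zero : ∫ y, inner ℝ c (toEuclideanLin A (y - m)) ∂ν = 0 := by
    rw [integral_inner (hv.integrable one_le_two),
      integral_toEuclideanLin_sub_eq_zero (hint.integrable one_le_two) hmean, inner_zero_right]
  have hsecond : ∫ y, ‖toEuclideanLin A (y - m)‖ ^ 2 ∂ν = (A * C * Aᵀ).trace := by
    simp_rw [EuclideanSpace.real_norm_sq_eq, sq]
    rw [integral_finsetSum _ fun i _ => integrable_apply_mul_apply hv hv i i]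
    simp_rw [integral_toEuclideanLin_sub_apply_mul hint hcov]
    rfl
  simp_rw [norm_add_sq_real]
  rw [integral_add hlin hnorm, integral_add (integrable_const _) hinner,
    integral_const, integral_const_mul, hmean_zero, hsecond]
  simp

end Moments

/-- **The affine transport map matches the target moments and attains the Gelbrich cost.**
Let `Σ` be positive semidefinite, `Σ̃` positive definite, `ν` a probability measure on `ℝ^d`
with square-integrable identity, mean `μ̃` and covariance `Σ̃`, and `T y = μ + P (y - μ̃)`
with `P` the optimal transport map matrix. Then the pushforward `T_* ν` has mean `μ` and
covariance `Σ`, and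
`∫ ‖T y - y‖² dν = ‖μ - μ̃‖² + tr Σ + tr Σ̃ - 2 tr ((Σ̃^{1/2} Σ Σ̃^{1/2})^{1/2})`. -/
theorem otMap_pushforward_moments_and_cost
    {d : ℕ}
    (S St : Matrix (Fin d) (Fin d) ℝ) (hS : S.PosSemidef) (hSt : St.PosDef)
    (μ μt : EuclideanSpace ℝ (Fin d))
    (ν : Measure (EuclideanSpace ℝ (Fin d))) [IsProbabilityMeasure ν]
    (hint : MemLp (fun y => y) 2 ν)
    (hmean : (∫ y, y ∂ν) = μt)
    (hcov : ∀ i j, (∫ y, (y i - μt i) * (y j - μt j) ∂ν) = St i j)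
    (T : EuclideanSpace ℝ (Fin d) → EuclideanSpace ℝ (Fin d))
    (hT : ∀ y, T y = μ + Matrix.toEuclideanLin (otMap S St) (y - μt)) :
    (∫ x, x ∂(ν.map T)) = μ ∧
    (∀ i j, (∫ x, (x i - μ i) * (x j - μ j) ∂(ν.map T)) = S i j) ∧
    (∫ y, ‖T y - y‖ ^ 2 ∂ν) =
      ‖μ - μt‖ ^ 2 + S.trace + St.trace
        - 2 * (psdSqrt (psdSqrt St * S * psdSqrt St)).trace := by
  obtain rfl : T = fun y => μ + toEuclideanLin (otMap S St) (y - μt) := funext hT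
  have hT_meas : AEMeasurable (fun y => μ + toEuclideanLin (otMap S St) (y - μt)) ν :=
    (continuous_const.add ((LinearMap.continuous_of_finiteDimensional _).comp
      (continuous_id.sub continuous_const))).aemeasurable
  refine ⟨?_, fun i j => ?_, ?_⟩
  · rw [integral_map (f := fun x => x) hT_meas aestronglyMeasurable_id,
      integral_add (integrable_const μ) ((memLp_toEuclideanLin_sub hint _).integrable one_le_two),
      integral_toEuclideanLin_sub_eq_zero (hint.integrable one_le_two) hmean, integral_const]
    simp
  · have hcoord : Continuous fun x : EuclideanSpace ℝ (Fin d) => (x i - μ i) * (x j - μ j) := by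
      fun_prop
    rw [integral_map hT_meas hcoord.aestronglyMeasurable]
    simp only [PiLp.add_apply, add_sub_cancel_left]
    rw [integral_toEuclideanLin_sub_apply_mul hint hcov, otMap_transpose hS hSt.posSemidef,
      otMap_mul_mul_otMap hS hSt]
  · have hdisp : ∀ y, μ + toEuclideanLin (otMap S St) (y - μt) - y =
        (μ - μt) + toEuclideanLin (otMap S St - 1) (y - μt) := by
      intro y
      simp only [map_sub, LinearMap.sub_apply, toLpLin_one, LinearMap.id_apply]
      abel
    simp_rw [hdisp]
    rw [integral_norm_add_toEuclideanLin_sub_sq hint hmean hcov,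
      trace_otMap_sub_one_mul_mul_transpose hS hSt]
    ring
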